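/- arXiv:1907.03100 — 2 statements merged into one kernel-verified Lean document; each statement's English description precedes it below -/
import Mathlib

section
/- Let d ≥ 1, and consider the deep decoder with d layers. Assume ξ ≥ 0, μ ≥ 1, that the fixed input matrix satisfies ‖B₁‖_F ≤ ξ, and that every upsampling matrix satisfies ‖Uᵢ‖ ≤ 1 in spectral norm. Let C = (C₁,…,C_{d−1},c_d) and C′ = (C₁′,…,C_{d−1}′,c_d′) be two coefficient tuples with ‖Cᵢ‖_F ≤ μ and ‖Cᵢ′‖_F ≤ μ for all i = 1,…,d−1, and let B_d, B_d′ denote the corresponding final layer matrices (built from the same input B₁). Then ‖B_d − B_d′‖_F ≤ ξ · μ^{d−1} · Σ_{i=1}^{d−1} ‖Cᵢ − Cᵢ′‖_F. -/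
open Matrix Finset

/-- Euclidean (ℓ₂) norm of a vector. -/
noncomputable def euclNorm {ι : Type*} [Fintype ι] (v : ι → ℝ) : ℝ :=
  Real.sqrt (∑ i, v i ^ 2)

/-- Frobenius norm of a matrix. -/
noncomputable def frobNorm {ι κ : Type*} [Fintype ι] [Fintype κ] (A : Matrix ι κ ℝ) : ℝ :=
  Real.sqrt (∑ i, ∑ j, A i j ^ 2)

/-- Spectral (operator ℓ₂ → ℓ₂) norm of a matrix. -/
noncomputable def specNorm {ι κ : Type*} [Fintype ι] [Fintype κ] (A : Matrix ι κ ℝ) : ℝ :=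
  sSup {r : ℝ | ∃ v : κ → ℝ, euclNorm v ≤ 1 ∧ r = euclNorm (A *ᵥ v)}

/-- Entrywise ReLU of a matrix. -/
def reluM {ι κ : Type*} (A : Matrix ι κ ℝ) : Matrix ι κ ℝ :=
  Matrix.of fun i j => max (A i j) 0

/-!
The ReLU is 1-Lipschitz and a matrix of spectral norm at most one does not increase the
Frobenius norm (apply it column by column), so one layer `X ↦ relu (U X C)` satisfies
`‖X₊ - X₊'‖ ≤ ‖X - X'‖ ‖C‖ + ‖X'‖ ‖C - C'‖`, from `U X C - U X' C' = U (X - X') C + U X' (C - C')`.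
With `‖B' m‖ ≤ ξ μ ^ m` the errors `e m = ‖B m - B' m‖` obey `e (m + 1) ≤ μ e m + ξ μ ^ m ‖C m - C' m‖`
and `e 0 = 0`, which unrolls to the bound.
-/

section Norms

variable {ι κ τ : Type*} [Fintype ι] [Fintype κ] [Fintype τ]

lemma euclNorm_eq_norm (v : ι → ℝ) : euclNorm v = ‖(WithLp.toLp 2 v : EuclideanSpace ℝ ι)‖ := by
  simp [euclNorm, EuclideanSpace.norm_eq]

lemma specNorm_eq_opNorm [DecidableEq κ] (A : Matrix ι κ ℝ) :
    specNorm A = ‖LinearMap.toContinuousLinearMap (Matrix.toEuclideanLin A)‖ := by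
  rw [← ContinuousLinearMap.sSup_unitClosedBall_eq_norm, specNorm]
  congr 1
  ext r
  simp only [Set.mem_ofPred_eq, Set.mem_image, Metric.mem_closedBall, dist_zero_right]
  constructor
  · rintro ⟨v, hv, rfl⟩
    exact ⟨WithLp.toLp 2 v, by rwa [← euclNorm_eq_norm], (euclNorm_eq_norm _).symm⟩
  · rintro ⟨x, hx, rfl⟩
    exact ⟨x.ofLp, by rwa [euclNorm_eq_norm], (euclNorm_eq_norm _).symm⟩

lemma euclNorm_mulVec_le (A : Matrix ι κ ℝ) (v : κ → ℝ) :
    euclNorm (A *ᵥ v) ≤ specNorm A * euclNorm v := by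
  classical
  rw [specNorm_eq_opNorm, euclNorm_eq_norm, euclNorm_eq_norm]
  exact (LinearMap.toContinuousLinearMap (Matrix.toEuclideanLin A)).le_opNorm (WithLp.toLp 2 v)

lemma frobNorm_nonneg (A : Matrix ι κ ℝ) : 0 ≤ frobNorm A := Real.sqrt_nonneg _

lemma sq_frobNorm_eq_sum_sq_euclNorm (A : Matrix ι κ ℝ) :
    frobNorm A ^ 2 = ∑ i, euclNorm (A i) ^ 2 := by
  simp only [frobNorm, euclNorm]
  rw [Real.sq_sqrt (by positivity)]
  exact sum_congr rfl fun i _ => (Real.sq_sqrt (by positivity)).symm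

lemma frobNorm_le_of_abs_le {A B : Matrix ι κ ℝ} (h : ∀ i j, |A i j| ≤ |B i j|) :
    frobNorm A ≤ frobNorm B :=
  Real.sqrt_le_sqrt <| sum_le_sum fun i _ => sum_le_sum fun j _ => sq_le_sq.2 (h i j)

section Frobenius

attribute [local instance] Matrix.frobeniusNormedAddCommGroup

lemma frobNorm_eq_norm (A : Matrix ι κ ℝ) : frobNorm A = ‖A‖ := by
  simp [frobNorm, Matrix.frobenius_norm_def, Real.sqrt_eq_rpow]

lemma frobNorm_zero : frobNorm (0 : Matrix ι κ ℝ) = 0 := by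
  rw [frobNorm_eq_norm, norm_zero]

lemma frobNorm_add_le (A B : Matrix ι κ ℝ) : frobNorm (A + B) ≤ frobNorm A + frobNorm B := by
  simp only [frobNorm_eq_norm]
  exact norm_add_le A B

lemma frobNorm_transpose (A : Matrix ι κ ℝ) : frobNorm Aᵀ = frobNorm A := by
  simp only [frobNorm_eq_norm]
  exact Matrix.frobenius_norm_transpose A

lemma frobNorm_mul_le (A : Matrix ι κ ℝ) (B : Matrix κ τ ℝ) :
    frobNorm (A * B) ≤ frobNorm A * frobNorm B := by
  simp only [frobNorm_eq_norm]
  exact Matrix.frobenius_norm_mul A B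

end Frobenius

lemma frobNorm_mul_le_specNorm_mul (A : Matrix ι κ ℝ) (M : Matrix κ τ ℝ) :
    frobNorm (A * M) ≤ specNorm A * frobNorm M := by
  have hA : 0 ≤ specNorm A := by
    classical
    exact specNorm_eq_opNorm A ▸ norm_nonneg _
  rw [← frobNorm_transpose (A * M), ← frobNorm_transpose M,
    ← pow_le_pow_iff_left₀ (frobNorm_nonneg _) (mul_nonneg hA (frobNorm_nonneg _)) two_ne_zero,
    mul_pow, sq_frobNorm_eq_sum_sq_euclNorm, sq_frobNorm_eq_sum_sq_euclNorm, mul_sum]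
  refine sum_le_sum fun j _ => ?_
  rw [← mul_pow, Matrix.transpose_mul, Matrix.mul_apply_eq_vecMul, Matrix.vecMul_transpose]
  exact pow_le_pow_left₀ (Real.sqrt_nonneg _) (euclNorm_mulVec_le A _) 2

end Norms

lemma reluM_zero {ι κ : Type*} : reluM (0 : Matrix ι κ ℝ) = 0 := by
  ext i j
  simp [reluM]

section ReLU

variable {ι κ : Type*} [Fintype ι] [Fintype κ]

lemma frobNorm_reluM_sub_reluM_le (X Y : Matrix ι κ ℝ) :
    frobNorm (reluM X - reluM Y) ≤ frobNorm (X - Y) :=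
  frobNorm_le_of_abs_le fun i j => abs_max_sub_max_le_abs (X i j) (Y i j) 0

lemma frobNorm_reluM_le (X : Matrix ι κ ℝ) : frobNorm (reluM X) ≤ frobNorm X := by
  simpa [reluM_zero] using frobNorm_reluM_sub_reluM_le X 0

end ReLU

section Layer

variable {ι κ τ ρ : Type*} [Fintype ι] [Fintype κ] [Fintype τ] [Fintype ρ]
  {U : Matrix ι κ ℝ}

lemma frobNorm_mul_le_of_specNorm_le_one (hU : specNorm U ≤ 1) (M : Matrix κ τ ℝ) :
    frobNorm (U * M) ≤ frobNorm M :=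
  (frobNorm_mul_le_specNorm_mul U M).trans <|
    mul_le_of_le_one_left (frobNorm_nonneg M) hU

lemma frobNorm_reluM_mul_mul_le (hU : specNorm U ≤ 1) (X : Matrix κ τ ℝ) (C : Matrix τ ρ ℝ) :
    frobNorm (reluM (U * X * C)) ≤ frobNorm X * frobNorm C :=
  calc frobNorm (reluM (U * X * C)) ≤ frobNorm (U * (X * C)) := by
        rw [← Matrix.mul_assoc]; exact frobNorm_reluM_le _
    _ ≤ frobNorm (X * C) := frobNorm_mul_le_of_specNorm_le_one hU _
    _ ≤ frobNorm X * frobNorm C := frobNorm_mul_le X C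

lemma frobNorm_reluM_mul_mul_sub_le (hU : specNorm U ≤ 1) (X X' : Matrix κ τ ℝ)
    (C C' : Matrix τ ρ ℝ) :
    frobNorm (reluM (U * X * C) - reluM (U * X' * C')) ≤
      frobNorm (X - X') * frobNorm C + frobNorm X' * frobNorm (C - C') :=
  calc frobNorm (reluM (U * X * C) - reluM (U * X' * C'))
      ≤ frobNorm (U * ((X - X') * C + X' * (C - C'))) := by
        convert frobNorm_reluM_sub_reluM_le _ _ using 2
        simp only [Matrix.mul_add, Matrix.mul_sub, Matrix.sub_mul, Matrix.mul_assoc]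
        abel
    _ ≤ frobNorm ((X - X') * C + X' * (C - C')) := frobNorm_mul_le_of_specNorm_le_one hU _
    _ ≤ frobNorm ((X - X') * C) + frobNorm (X' * (C - C')) := frobNorm_add_le _ _
    _ ≤ frobNorm (X - X') * frobNorm C + frobNorm X' * frobNorm (C - C') :=
        add_le_add (frobNorm_mul_le _ _) (frobNorm_mul_le _ _)

end Layer

theorem le_mul_pow_mul_sum_of_le_mul_add {a b δ : ℕ → ℝ} {ξ μ : ℝ} (N : ℕ) (hξ : 0 ≤ ξ)
    (hμ : 1 ≤ μ) (hδ : ∀ m, 0 ≤ δ m) (ha : a 0 ≤ 0) (hb : ∀ m < N, b m ≤ ξ * μ ^ m)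
    (hstep : ∀ m < N, a (m + 1) ≤ a m * μ + b m * δ m) :
    a N ≤ ξ * μ ^ N * ∑ m ∈ range N, δ m := by
  induction N with
  | zero => simpa using ha
  | succ N ih =>
    have ha_N := ih (fun m hm => hb m (hm.trans N.lt_succ_self))
      (fun m hm => hstep m (hm.trans N.lt_succ_self))
    have hμ0 : 0 ≤ μ := zero_le_one.trans hμ
    calc a (N + 1) ≤ a N * μ + b N * δ N := hstep N N.lt_succ_self
      _ ≤ ξ * μ ^ N * (∑ m ∈ range N, δ m) * μ + ξ * μ ^ N * δ N := by
        gcongr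
        · exact hδ N
        · exact hb N N.lt_succ_self
      _ ≤ ξ * μ ^ (N + 1) * ∑ m ∈ range (N + 1), δ m := by
        rw [sum_range_succ, pow_succ]
        have : ξ * μ ^ N * δ N ≤ ξ * μ ^ N * δ N * μ :=
          le_mul_of_one_le_right (by have := hδ N; positivity) hμ
        linarith

/-- Layers are `0`-indexed: `B (d - 1)` is the paper's `B_d` and `C 0, …, C (d - 2)` are its
`C₁, …, C_{d-1}`. -/
theorem deep_decoder_final_layer_perturbation_general
    (d k : ℕ) (n : ℕ → ℕ)
    (ξ μ : ℝ) (hξ : 0 ≤ ξ) (hμ : 1 ≤ μ)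
    (U : ∀ i : ℕ, Matrix (Fin (n (i + 1))) (Fin (n i)) ℝ)
    (hU : ∀ i, i < d - 1 → specNorm (U i) ≤ 1)
    (B B' : ∀ i : ℕ, Matrix (Fin (n i)) (Fin k) ℝ)
    (C C' : ℕ → Matrix (Fin k) (Fin k) ℝ)
    (hB1 : frobNorm (B 0) ≤ ξ) (hBB' : B' 0 = B 0)
    (hrec : ∀ i, i < d - 1 → B (i + 1) = reluM (U i * B i * C i))
    (hrec' : ∀ i, i < d - 1 → B' (i + 1) = reluM (U i * B' i * C' i))
    (hC : ∀ i, i < d - 1 → frobNorm (C i) ≤ μ)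
    (hC' : ∀ i, i < d - 1 → frobNorm (C' i) ≤ μ) :
    frobNorm (B (d - 1) - B' (d - 1)) ≤
      ξ * μ ^ (d - 1) * ∑ i ∈ Finset.range (d - 1), frobNorm (C i - C' i) := by
  have hB'_le : ∀ m < d - 1, frobNorm (B' m) ≤ ξ * μ ^ m := fun m hm =>
    calc frobNorm (B' m) ≤ μ ^ m * frobNorm (B' 0) :=
          le_geom (u := fun m => frobNorm (B' m)) (zero_le_one.trans hμ) m fun i hi => by
            have hi' := hi.trans hm
            rw [hrec' i hi', mul_comm]
            exact (frobNorm_reluM_mul_mul_le (hU i hi') _ _).trans <|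
              mul_le_mul_of_nonneg_left (hC' i hi') (frobNorm_nonneg _)
      _ ≤ ξ * μ ^ m := by
          rw [hBB', mul_comm]
          exact mul_le_mul_of_nonneg_right hB1 (pow_nonneg (zero_le_one.trans hμ) m)
  refine le_mul_pow_mul_sum_of_le_mul_add (a := fun m => frobNorm (B m - B' m)) (d - 1) hξ hμ
    (fun m => frobNorm_nonneg _) (by rw [hBB', sub_self, frobNorm_zero]) hB'_le fun m hm => ?_
  rw [hrec m hm, hrec' m hm]
  exact (frobNorm_reluM_mul_mul_sub_le (hU m hm) _ _ _ _).trans <|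
    add_le_add_left (mul_le_mul_of_nonneg_left (hC m hm) (frobNorm_nonneg _)) _

/-- For two deep decoders with the same input `B 0` and upsampling matrices but
coefficient matrices `C i` resp. `C' i` (layers 0-indexed, so `B (d-1)` is the paper's `B_d`
and `C i`, `i = 0, …, d-2`, are the paper's `C₁, …, C_{d-1}`), the final layers satisfy
`‖B_d − B_d'‖_F ≤ ξ μ^{d-1} Σ_{i=1}^{d-1} ‖Cᵢ − Cᵢ'‖_F`. -/
theorem deep_decoder_final_layer_perturbation
    (d k : ℕ) (hd : 1 ≤ d) (n : ℕ → ℕ)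
    (ξ μ : ℝ) (hξ : 0 ≤ ξ) (hμ : 1 ≤ μ)
    (U : ∀ i : ℕ, Matrix (Fin (n (i + 1))) (Fin (n i)) ℝ)
    (hU : ∀ i, i < d - 1 → specNorm (U i) ≤ 1)
    (B B' : ∀ i : ℕ, Matrix (Fin (n i)) (Fin k) ℝ)
    (C C' : ℕ → Matrix (Fin k) (Fin k) ℝ)
    (hB1 : frobNorm (B 0) ≤ ξ) (hBB' : B' 0 = B 0)
    (hrec : ∀ i, i < d - 1 → B (i + 1) = reluM (U i * B i * C i))
    (hrec' : ∀ i, i < d - 1 → B' (i + 1) = reluM (U i * B' i * C' i))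
    (hC : ∀ i, i < d - 1 → frobNorm (C i) ≤ μ)
    (hC' : ∀ i, i < d - 1 → frobNorm (C' i) ≤ μ) :
    frobNorm (B (d - 1) - B' (d - 1)) ≤
      ξ * μ ^ (d - 1) * ∑ i ∈ Finset.range (d - 1), frobNorm (C i - C' i) :=
  deep_decoder_final_layer_perturbation_general d k n ξ μ hξ hμ U hU B B' C C' hB1 hBB' hrec hrec'
    hC hC'
end

section
/- Let n ≥ 2 and k ≥ 5, and let W ∈ ℝ^{n×k}. For v ∈ ℝ^k, let D(v) ∈ ℝ^{n×n} denote the diagonal matrix whose (i,i) entry is 1 if (Wv)_i > 0 and 0 otherwise. Then the set { D(v) · W : v ∈ ℝ^k } ⊆ ℝ^{n×k} has cardinality at most n^k. -/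
open Matrix Finset

private lemma two_mul_choose_two (n : ℕ) : 2 * n.choose 2 = n * (n - 1) := by
  have h := Nat.descFactorial_eq_factorial_mul_choose n 2
  have h3 : n.descFactorial 2 = (n - 1) * n := by
    simp [Nat.descFactorial_succ, Nat.descFactorial_zero, Nat.mul_comm]
  rw [h3, show (Nat.factorial 2) = 2 from rfl] at h
  rw [← h, Nat.mul_comm]

private lemma sum_choose_le_pow (n : ℕ) (hn : 2 ≤ n) :
    ∀ k, 2 ≤ k → ∑ i ∈ Finset.range (k + 1), n.choose i ≤ n ^ k := by
  refine Nat.le_induction ?_ ?_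
  · -- base case k = 2
    obtain ⟨m, rfl⟩ : ∃ m, n = m + 2 := ⟨n - 2, by omega⟩
    have h2 := two_mul_choose_two (m + 2)
    rw [Finset.sum_range_succ, Finset.sum_range_succ, Finset.sum_range_succ,
      Finset.sum_range_zero]
    simp only [Nat.choose_zero_right, Nat.choose_one_right]
    have h2' : 2 * (m + 2).choose 2 = (m + 2) * (m + 1) := by
      rw [h2]; congr 1
    nlinarith [h2']
  · intro k hk ih
    rw [Finset.sum_range_succ]
    have hC : 2 * n.choose (k + 1) ≤ n ^ (k + 1) := by
      have h1 : n.descFactorial (k + 1) ≤ n ^ (k + 1) := Nat.descFactorial_le_pow n (k + 1)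
      have h2 : n.descFactorial (k + 1) = Nat.factorial (k + 1) * n.choose (k + 1) :=
        Nat.descFactorial_eq_factorial_mul_choose n (k + 1)
      have h3 : 2 ≤ Nat.factorial (k + 1) := by
        calc (2:ℕ) = Nat.factorial 2 := rfl
        _ ≤ Nat.factorial (k + 1) := Nat.factorial_le (by omega)
      calc 2 * n.choose (k + 1) ≤ Nat.factorial (k + 1) * n.choose (k + 1) :=
            Nat.mul_le_mul_right _ h3
        _ = n.descFactorial (k + 1) := h2.symm
        _ ≤ n ^ (k + 1) := h1
    have hpow : 2 * n ^ k ≤ n ^ (k + 1) := by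
      rw [pow_succ, mul_comm (n ^ k) n]
      exact Nat.mul_le_mul_right _ hn
    omega

/-- For `n ≥ 2`, `k ≥ 5` and `W ∈ ℝ^{n×k}`, the set of matrices
`diag(𝟙{Wv > 0}) · W`, as `v` ranges over `ℝ^k`, is finite with at most `n^k` elements. -/
theorem sign_pattern_count
    (n k : ℕ) (hn : 2 ≤ n) (hk : 5 ≤ k) (W : Matrix (Fin n) (Fin k) ℝ) :
    {A : Matrix (Fin n) (Fin k) ℝ | ∃ v : Fin k → ℝ,
      A = Matrix.diagonal (fun i => if 0 < (W *ᵥ v) i then (1 : ℝ) else 0) * W}.Finite ∧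
    {A : Matrix (Fin n) (Fin k) ℝ | ∃ v : Fin k → ℝ,
      A = Matrix.diagonal (fun i => if 0 < (W *ᵥ v) i then (1 : ℝ) else 0) * W}.ncard
      ≤ n ^ k := by
  classical
  set pat : (Fin k → ℝ) → Finset (Fin n) :=
    fun v => Finset.univ.filter (fun i => 0 < (W *ᵥ v) i) with hpat
  set f : Finset (Fin n) → Matrix (Fin n) (Fin k) ℝ :=
    fun s => Matrix.diagonal (fun i => if i ∈ s then (1:ℝ) else 0) * W with hf
  have hS : {A : Matrix (Fin n) (Fin k) ℝ | ∃ v : Fin k → ℝ,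
      A = Matrix.diagonal (fun i => if 0 < (W *ᵥ v) i then (1 : ℝ) else 0) * W}
      = f '' (Set.range pat) := by
    have key : ∀ v, Matrix.diagonal (fun i => if 0 < (W *ᵥ v) i then (1 : ℝ) else 0) * W
        = f (pat v) := by
      intro v
      simp only [hf, hpat]
      congr 1
      ext i
      simp
    ext A
    simp only [Set.mem_setOf_eq, Set.mem_image, Set.mem_range]
    constructor
    · rintro ⟨v, rfl⟩
      exact ⟨pat v, ⟨v, rfl⟩, (key v).symm⟩
    · rintro ⟨s, ⟨v, rfl⟩, rfl⟩
      exact ⟨v, (key v).symm⟩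
  have hfin : (Set.range pat).Finite := Set.toFinite _
  refine ⟨hS ▸ hfin.image f, ?_⟩
  rw [hS]
  -- the finset of achievable patterns
  set 𝒜 : Finset (Finset (Fin n)) := hfin.toFinset with h𝒜
  -- VC dimension bound
  have hvc : 𝒜.vcDim ≤ k := by
    rw [Finset.vcDim]
    refine Finset.sup_le fun s hs => ?_
    rw [Finset.mem_shatterer] at hs
    by_contra hcard
    push_neg at hcard
    -- more than k rows are linearly dependent
    have hdep : ¬ LinearIndependent ℝ (fun i : s => (W i : Fin k → ℝ)) := by
      intro hli
      have h1 := hli.fintype_card_le_finrank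
      rw [Module.finrank_fintype_fun_eq_card, Fintype.card_coe, Fintype.card_fin] at h1
      omega
    obtain ⟨g, hg0, i₀, hi₀⟩ := Fintype.not_linearIndependent_iff.mp hdep
    -- get a relation with a strictly positive coefficient
    obtain ⟨g, hg0, i₁, hi₁⟩ : ∃ g : s → ℝ,
        (∑ i, g i • (W i : Fin k → ℝ)) = 0 ∧ ∃ i, 0 < g i := by
      rcases hi₀.lt_or_gt with hneg | hposi
      · refine ⟨-g, ?_, i₀, by simpa using hneg⟩
        simp only [Pi.neg_apply, neg_smul, Finset.sum_neg_distrib, hg0, neg_zero]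
      · exact ⟨g, hg0, i₀, hposi⟩
    -- extend coefficients to all of Fin n
    set c : Fin n → ℝ := fun i => if h : i ∈ s then g ⟨i, h⟩ else 0 with hc
    have hcsum : (∑ i ∈ s, c i • (W i : Fin k → ℝ)) = 0 := by
      rw [← Finset.sum_attach s (fun i => c i • (W i : Fin k → ℝ))]
      rw [← hg0]
      refine Finset.sum_congr rfl fun x _ => ?_
      simp [hc, x.2]
    have hc₁ : (i₁ : Fin n) ∈ s ∧ 0 < c i₁ := ⟨i₁.2, by simp [hc, i₁.2, hi₁]⟩
    -- the unrealizable pattern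
    obtain ⟨u, hu, hsu⟩ := hs (Finset.filter_subset (fun i => 0 < c i) s)
    rw [h𝒜, Set.Finite.mem_toFinset, Set.mem_range] at hu
    obtain ⟨v, rfl⟩ := hu
    have hrow : ∀ j, ∑ i ∈ s, c i * W i j = 0 := by
      intro j
      have := congrFun hcsum j
      simpa [Finset.sum_apply] using this
    have h0 : (∑ i ∈ s, c i * (W *ᵥ v) i) = 0 := by
      calc ∑ i ∈ s, c i * (W *ᵥ v) i
          = ∑ i ∈ s, ∑ j, (c i * W i j) * v j := by
            refine Finset.sum_congr rfl fun i _ => ?_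
            simp [Matrix.mulVec, dotProduct, Finset.mul_sum, mul_assoc]
        _ = ∑ j, ∑ i ∈ s, (c i * W i j) * v j := Finset.sum_comm
        _ = ∑ j, (∑ i ∈ s, c i * W i j) * v j := by
            simp [Finset.sum_mul]
        _ = 0 := by simp [hrow]
    have hterm : ∀ i ∈ s, 0 ≤ c i * (W *ᵥ v) i := by
      intro i hi
      rcases le_or_gt (c i) 0 with hci | hci
      · have hiu : i ∉ pat v := by
          intro hiu
          have : i ∈ s ∩ pat v := Finset.mem_inter.mpr ⟨hi, hiu⟩
          rw [hsu, Finset.mem_filter] at this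
          exact absurd this.2 (not_lt.mpr hci)
        have : ¬ 0 < (W *ᵥ v) i := by
          intro hpos
          exact hiu (by simp [hpat, hpos])
        have h' := not_lt.mp this
        nlinarith
      · have hit : i ∈ s ∩ pat v := by
          rw [hsu, Finset.mem_filter]; exact ⟨hi, hci⟩
        have : 0 < (W *ᵥ v) i := by
          have := (Finset.mem_inter.mp hit).2
          simpa [hpat] using this
        exact le_of_lt (mul_pos hci this)
    have hterm₁ : 0 < c i₁ * (W *ᵥ v) (i₁ : Fin n) := by
      have hit : (i₁ : Fin n) ∈ s ∩ pat v := by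
        rw [hsu, Finset.mem_filter]; exact ⟨hc₁.1, hc₁.2⟩
      have : 0 < (W *ᵥ v) (i₁ : Fin n) := by
        have := (Finset.mem_inter.mp hit).2
        simpa [hpat] using this
      exact mul_pos hc₁.2 this
    have := Finset.sum_pos' hterm ⟨i₁, hc₁.1, hterm₁⟩
    rw [h0] at this
    exact lt_irrefl 0 this
  -- count
  calc (f '' Set.range pat).ncard
      ≤ (Set.range pat).ncard := Set.ncard_image_le hfin
    _ = 𝒜.card := Set.ncard_eq_toFinset_card _ hfin
    _ ≤ 𝒜.shatterer.card := Finset.card_le_card_shatterer 𝒜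
    _ ≤ ∑ i ∈ Finset.Iic 𝒜.vcDim, (Fintype.card (Fin n)).choose i :=
        Finset.card_shatterer_le_sum_vcDim
    _ ≤ ∑ i ∈ Finset.Iic k, n.choose i := by
        rw [Fintype.card_fin]
        exact Finset.sum_le_sum_of_subset (Finset.Iic_subset_Iic.mpr hvc)
    _ = ∑ i ∈ Finset.range (k + 1), n.choose i := by
        congr 1
        ext x
        simp [Nat.lt_succ_iff]
    _ ≤ n ^ k := sum_choose_le_pow n hn k (by omega)
end
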